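/- arXiv:1301.5122 — 6 statements merged into one kernel-verified Lean document; each statement's English description precedes it below -/
import Mathlib

section
/- For a natural number n, the integer 24·n + 1 is a perfect square if and only if n = k(3k−1)/2 for some integer k (i.e. n is a generalized pentagonal number). -/
/-! The pentagonal numbers are exactly the `n` with `24 * n + 1 = (6 * k - 1) ^ 2`, because
`(6 * k - 1) ^ 2 = 12 * k * (3 * k - 1) + 1`. Conversely, a square `r ^ 2` that is `1` mod `24`
has `r ≡ ±1 (mod 6)`, so replacing `r` by `-r` if necessary, `r = 6 * k - 1`. -/

theorem ZMod.sq_eq_one_iff_six {x : ZMod 6} : x ^ 2 = 1 ↔ x = 1 ∨ x = -1 := by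
  revert x
  decide

theorem Int.exists_sq_eq_six_mul_sub_one_sq {r : ℤ} (h : r ^ 2 ≡ 1 [ZMOD 6]) :
    ∃ k : ℤ, r ^ 2 = (6 * k - 1) ^ 2 := by
  have hr : (r : ZMod 6) = 1 ∨ (r : ZMod 6) = -1 := by
    rw [← ZMod.sq_eq_one_iff_six]
    exact_mod_cast (ZMod.intCast_eq_intCast_iff _ _ 6).2 h
  rcases hr with hr | hr
  · obtain ⟨j, hj⟩ := (ZMod.intCast_eq_intCast_iff_dvd_sub 1 r 6).1 (by simpa using hr.symm)
    exact ⟨-j, by rw [show r = 6 * j + 1 by omega]; ring⟩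
  · obtain ⟨j, hj⟩ := (ZMod.intCast_eq_intCast_iff_dvd_sub (-1) r 6).1 (by simpa using hr.symm)
    exact ⟨j, by rw [show r = 6 * j - 1 by omega]⟩

theorem six_mul_sub_one_sq_eq_iff (k m : ℤ) :
    (6 * k - 1) ^ 2 = 24 * m + 1 ↔ 2 * m = k * (3 * k - 1) := by
  have key : (6 * k - 1) ^ 2 = 12 * (k * (3 * k - 1)) + 1 := by ring
  omega

/-- `24 * n + 1` is a perfect square if and only if `n` is a generalized pentagonal
number, i.e. `n = k * (3 * k - 1) / 2` for some integer `k`. -/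
theorem isSquare_24n_add_one_iff_pentagonal (n : ℕ) :
    IsSquare (24 * (n : ℤ) + 1) ↔ ∃ k : ℤ, 2 * (n : ℤ) = k * (3 * k - 1) := by
  constructor
  · rintro ⟨r, hr⟩
    rw [← sq] at hr
    obtain ⟨k, hk⟩ := Int.exists_sq_eq_six_mul_sub_one_sq (r := r) (by
      rw [← hr, Int.ModEq]
      omega)
    exact ⟨k, (six_mul_sub_one_sq_eq_iff k n).1 (hk ▸ hr.symm)⟩
  · rintro ⟨k, hk⟩
    exact ⟨6 * k - 1, by rw [← sq]; exact ((six_mul_sub_one_sq_eq_iff k n).2 hk).symm⟩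
end

section
/- Let I be a finite subset of ℕ with at least two elements. Then: (a) for every integer i such that I + i = {j + i : j ∈ I} ⊆ ℕ, one has z_{I+i} = z_I; (b) for every positive rational r such that rI = {r·j : j ∈ I} ⊆ ℕ, one has z_{rI} = z_I; (c) z_{I^s} = z_I, where I^s = {min I + max I − j : j ∈ I} is the symmetric (reflected) set of I. In particular, equivalent finite subsets I ∼ J satisfy z_I = z_J. -/
/-!
A rational affine change of variable `d * j = c * m + t` carrying `I` onto `J` turns
`q * m + a` into `((c * d * q) * j + (c ^ 2 * a - c * t * q)) / c ^ 2`, so it maps pairs for `I`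
to pairs for `J` up to a square factor. Dividing out the largest square factor of the gcd
restores the squarefree condition, and the maps for `(c, d, t)` and `(d, c, -t)` are then
mutually inverse. Translation, scaling by `r` and reflection are the cases `(1, 1, i)`,
`(r.num, r.den, 0)` and `(-1, 1, min I + max I)`.
-/

/-- `Zset I` is the set of pairs `(q, a) ∈ ℤ²` with `gcd q a` squarefree, `q ≠ 0`, and
`q * i + a` a perfect square for all `i ∈ I`. -/
def Zset (I : Finset ℕ) : Set (ℤ × ℤ) :=
  {p | Squarefree (Int.gcd p.1 p.2) ∧ p.1 ≠ 0 ∧ ∀ i ∈ I, IsSquare (p.1 * (i : ℤ) + p.2)}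

/-- `z I` is the number of elements of `Zset I`. -/
noncomputable def z (I : Finset ℕ) : ℕ := (Zset I).ncard

theorem Nat.eq_of_sq_mul_eq_sq_mul_of_squarefree {a b c e : ℕ} (h : b ^ 2 * a = c ^ 2 * e)
    (h0 : b ^ 2 * a ≠ 0) (ha : Squarefree a) (he : Squarefree e) : b = c := by
  have h0' : c ^ 2 * e ≠ 0 := h ▸ h0
  simp only [mul_ne_zero_iff, pow_ne_zero_iff two_ne_zero] at h0 h0'
  apply Nat.factorization_inj h0.1 h0'.1
  ext p
  have hp := congrArg (·.factorization p) h
  simp only [Nat.factorization_mul (pow_ne_zero 2 h0.1) h0.2,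
    Nat.factorization_mul (pow_ne_zero 2 h0'.1) h0'.2, Nat.factorization_pow,
    Finsupp.add_apply, Finsupp.smul_apply, smul_eq_mul] at hp
  have := ha.natFactorization_le_one p
  have := he.natFactorization_le_one p
  omega

theorem Int.gcd_sq_smul (k : ℤ) (x : ℤ × ℤ) :
    Int.gcd (k ^ 2 • x).1 (k ^ 2 • x).2 = k.natAbs ^ 2 * Int.gcd x.1 x.2 := by
  simp only [Prod.smul_fst, Prod.smul_snd, smul_eq_mul, Int.gcd_mul_left, Int.natAbs_pow]

theorem eq_of_sq_smul_eq_sq_smul {k l : ℤ} {x y : ℤ × ℤ} (h : k ^ 2 • x = l ^ 2 • y)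
    (hk : k ≠ 0) (hx : x.1 ≠ 0) (hxsf : Squarefree (Int.gcd x.1 x.2))
    (hysf : Squarefree (Int.gcd y.1 y.2)) : x = y := by
  have hgcd := congrArg (fun p : ℤ × ℤ => Int.gcd p.1 p.2) h
  simp only [Int.gcd_sq_smul] at hgcd
  have hx0 : Int.gcd x.1 x.2 ≠ 0 := fun h0 => hx (Int.gcd_eq_zero_iff.1 h0).1
  have hkl : k ^ 2 = l ^ 2 := by
    rw [← Int.natAbs_sq k, ← Int.natAbs_sq l,
      Nat.eq_of_sq_mul_eq_sq_mul_of_squarefree hgcd (by positivity) hxsf hysf]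
  rw [hkl] at h
  exact smul_right_injective _ (hkl ▸ pow_ne_zero 2 hk) h

theorem exists_eq_sq_smul_squarefree_gcd (p : ℤ × ℤ) (hp : p.1 ≠ 0) :
    ∃ x : ℤ × ℤ, ∃ k : ℤ, k ≠ 0 ∧ p = k ^ 2 • x ∧
      Squarefree (Int.gcd x.1 x.2) := by
  obtain ⟨a, b, -, hb, hba, ha⟩ :=
    Nat.sq_mul_squarefree_of_pos (Int.gcd_pos_of_ne_zero_left p.2 hp)
  have hdvd : (b : ℤ) ^ 2 ∣ (Int.gcd p.1 p.2 : ℤ) :=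
    ⟨a, by rw [← hba]; push_cast; rfl⟩
  obtain ⟨x₁, hx₁⟩ := hdvd.trans (Int.gcd_dvd_left _ _)
  obtain ⟨x₂, hx₂⟩ := hdvd.trans (Int.gcd_dvd_right _ _)
  have hp' : p = (b : ℤ) ^ 2 • (x₁, x₂) := Prod.ext hx₁ hx₂
  refine ⟨(x₁, x₂), b, by exact_mod_cast hb.ne', hp', ?_⟩
  have hgcd := Int.gcd_sq_smul (b : ℤ) (x₁, x₂)
  rw [← hp', ← hba, Int.natAbs_natCast] at hgcd
  rwa [← Nat.eq_of_mul_eq_mul_left (by positivity) hgcd]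

/-- The representative of `p` with squarefree gcd in its class under scaling by squares;
`p` itself when `p.1 = 0`. -/
noncomputable def sqReduce (p : ℤ × ℤ) : ℤ × ℤ :=
  if hp : p.1 ≠ 0 then (exists_eq_sq_smul_squarefree_gcd p hp).choose else p

theorem sqReduce_spec {p : ℤ × ℤ} (hp : p.1 ≠ 0) :
    ∃ k : ℤ, k ≠ 0 ∧ p = k ^ 2 • sqReduce p ∧
      Squarefree (Int.gcd (sqReduce p).1 (sqReduce p).2) := by
  rw [sqReduce, dif_pos hp]
  exact (exists_eq_sq_smul_squarefree_gcd p hp).choose_spec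

theorem sqReduce_eq_of_sq_smul_eq {k l : ℤ} {x y : ℤ × ℤ} (h : k ^ 2 • y = l ^ 2 • x)
    (hl : l ≠ 0) (hx : x.1 ≠ 0) (hsf : Squarefree (Int.gcd x.1 x.2)) :
    sqReduce y = x := by
  have hy : y.1 ≠ 0 := by
    intro hy
    have := congrArg Prod.fst h
    simp [hy, hl, hx] at this
  obtain ⟨m, hm, hym, hsf'⟩ := sqReduce_spec hy
  rw [hym, smul_smul, ← mul_pow] at h
  exact (eq_of_sq_smul_eq_sq_smul h.symm hl hx hsf hsf').symm

theorem Int.isSquare_of_sq_mul_eq_sq {k x s : ℤ} (hk : k ≠ 0) (h : k ^ 2 * x = s ^ 2) :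
    IsSquare x := by
  obtain ⟨v, rfl⟩ := (Int.pow_dvd_pow_iff two_ne_zero).1 ⟨x, h.symm⟩
  exact ⟨v, mul_left_cancel₀ (pow_ne_zero 2 hk) (by linear_combination h)⟩

/-- If `d * j = c * m + t`, then
`c ^ 2 * (q * m + a) = (c * d * q) * j + (c ^ 2 * a - c * t * q)`. -/
noncomputable def affineTransport (c d t : ℤ) (p : ℤ × ℤ) : ℤ × ℤ :=
  sqReduce (c * d * p.1, c ^ 2 * p.2 - c * t * p.1)

theorem affineTransport_spec {c d t : ℤ} (hc : c ≠ 0) (hd : d ≠ 0) {p : ℤ × ℤ}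
    (hp : p.1 ≠ 0) : ∃ k : ℤ, k ≠ 0 ∧
      c * d * p.1 = k ^ 2 * (affineTransport c d t p).1 ∧
      c ^ 2 * p.2 - c * t * p.1 = k ^ 2 * (affineTransport c d t p).2 ∧
      Squarefree (Int.gcd (affineTransport c d t p).1 (affineTransport c d t p).2) := by
  obtain ⟨k, hk, hku, hsf⟩ := sqReduce_spec (p := (c * d * p.1, c ^ 2 * p.2 - c * t * p.1))
    (mul_ne_zero (mul_ne_zero hc hd) hp)
  exact ⟨k, hk, congrArg Prod.fst hku, congrArg Prod.snd hku, hsf⟩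

theorem affineTransport_mapsTo {I J : Finset ℕ} {c d t : ℤ} (hc : c ≠ 0) (hd : d ≠ 0)
    (H : ∀ j ∈ J, ∃ m ∈ I, d * j = c * m + t) :
    Set.MapsTo (affineTransport c d t) (Zset I) (Zset J) := by
  rintro ⟨q, a⟩ ⟨-, hq, hsq⟩
  obtain ⟨k, hk, hq', ha', hsf⟩ := affineTransport_spec (t := t) hc hd hq
  refine ⟨hsf, fun hu => ?_, fun j hj => ?_⟩
  · simp [hu, hc, hd, hq] at hq'
  · obtain ⟨m, hm, hjm⟩ := H j hj
    obtain ⟨s, hs⟩ := hsq m hm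
    refine Int.isSquare_of_sq_mul_eq_sq hk (s := c * s) ?_
    linear_combination (c * q) * hjm - (j : ℤ) * hq' - ha' + c ^ 2 * hs

theorem affineTransport_leftInverse {c d t : ℤ} (hc : c ≠ 0) (hd : d ≠ 0) {p : ℤ × ℤ}
    (hp : p.1 ≠ 0) (hsf : Squarefree (Int.gcd p.1 p.2)) :
    affineTransport d c (-t) (affineTransport c d t p) = p := by
  obtain ⟨k, -, hq', ha', -⟩ := affineTransport_spec (t := t) hc hd hp
  refine sqReduce_eq_of_sq_smul_eq (k := k) (l := c * d) ?_ (mul_ne_zero hc hd) hp hsf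
  ext
  · simp only [Prod.smul_fst, smul_eq_mul]
    linear_combination (-(d * c)) * hq'
  · simp only [Prod.smul_snd, smul_eq_mul]
    linear_combination (-d ^ 2) * ha' - d * t * hq'

theorem z_eq_of_affine {I J : Finset ℕ} {c d t : ℤ} (hc : c ≠ 0) (hd : d ≠ 0)
    (hJI : ∀ j ∈ J, ∃ m ∈ I, d * j = c * m + t)
    (hIJ : ∀ m ∈ I, ∃ j ∈ J, d * j = c * m + t) :
    z J = z I := by
  have hIJ' : ∀ m ∈ I, ∃ j ∈ J, c * m = d * j + -t := fun m hm => by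
    obtain ⟨j, hj, hjm⟩ := hIJ m hm
    exact ⟨j, hj, by linarith⟩
  have hinv : Set.InvOn (affineTransport d c (-t)) (affineTransport c d t) (Zset I) (Zset J) :=
    ⟨fun p hp => affineTransport_leftInverse hc hd hp.2.1 hp.1,
      fun p hp => by
        simpa using affineTransport_leftInverse (t := -t) hd hc hp.2.1 hp.1⟩
  exact ((hinv.bijOn (affineTransport_mapsTo hc hd hJI)
    (affineTransport_mapsTo hd hc hIJ')).ncard_eq).symm

theorem Rat.den_mul_eq_num_mul {r : ℚ} {x y : ℤ} (h : (x : ℚ) = r * y) :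
    (r.den : ℤ) * x = r.num * y := by
  have : (r.den : ℚ) * x = r.num * y := by rw [h, ← Rat.mul_den_eq_num]; ring
  exact_mod_cast this

theorem z_invariant_under_equivalence_general (I : Finset ℕ) (hne : I.Nonempty) :
    (∀ i : ℤ, (∀ m ∈ I, 0 ≤ (m : ℤ) + i) →
      ∀ J : Finset ℕ, (∀ j : ℕ, j ∈ J ↔ ∃ m ∈ I, (j : ℤ) = (m : ℤ) + i) → z J = z I) ∧
    (∀ r : ℚ, 0 < r → (∀ m ∈ I, ∃ n : ℕ, (n : ℚ) = r * (m : ℚ)) →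
      ∀ J : Finset ℕ, (∀ j : ℕ, j ∈ J ↔ ∃ m ∈ I, (j : ℚ) = r * (m : ℚ)) → z J = z I) ∧
    z (I.image fun j => I.min' hne + I.max' hne - j) = z I := by
  refine ⟨fun i hi J hJ => ?_, fun r hr hrI J hJ => ?_, ?_⟩
  · refine z_eq_of_affine one_ne_zero one_ne_zero (t := i) (fun j hj => ?_) (fun m hm => ?_)
    · simpa using (hJ j).1 hj
    · refine ⟨((m : ℤ) + i).toNat, (hJ _).2 ⟨m, hm, ?_⟩, ?_⟩ <;> simp [hi m hm]
  · have hden : ∀ x y : ℕ, (x : ℚ) = r * y → (r.den : ℤ) * x = r.num * y + 0 :=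
      fun x y h => by simpa using Rat.den_mul_eq_num_mul (x := x) (y := y) (by exact_mod_cast h)
    refine z_eq_of_affine (d := r.den) (t := 0) (Rat.num_ne_zero.2 hr.ne') (by simp)
      (fun j hj => ?_) (fun m hm => ?_)
    · obtain ⟨m, hm, hjm⟩ := (hJ j).1 hj
      exact ⟨m, hm, hden j m hjm⟩
    · obtain ⟨n, hn⟩ := hrI m hm
      exact ⟨n, (hJ n).2 ⟨m, hm, hn⟩, hden n m hn⟩
  · have hle : ∀ m ∈ I, m ≤ I.min' hne + I.max' hne := fun m hm =>
      (I.le_max' m hm).trans (Nat.le_add_left _ _)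
    refine z_eq_of_affine (c := -1) (d := 1) (t := I.min' hne + I.max' hne) (by norm_num)
      one_ne_zero (fun j hj => ?_) (fun m hm => ⟨_, Finset.mem_image_of_mem _ hm, ?_⟩)
    · obtain ⟨m, hm, rfl⟩ := Finset.mem_image.1 hj
      exact ⟨m, hm, by push_cast [hle m hm]; ring⟩
    · push_cast [hle m hm]; ring

/-- The quantity `z I` is invariant under translation, scaling by positive rationals,
and reflection of the set `I`. -/
theorem z_invariant_under_equivalence (I : Finset ℕ) (hcard : 2 ≤ I.card)
    (hne : I.Nonempty) :
    (∀ i : ℤ, (∀ m ∈ I, 0 ≤ (m : ℤ) + i) →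
      ∀ J : Finset ℕ, (∀ j : ℕ, j ∈ J ↔ ∃ m ∈ I, (j : ℤ) = (m : ℤ) + i) → z J = z I) ∧
    (∀ r : ℚ, 0 < r → (∀ m ∈ I, ∃ n : ℕ, (n : ℚ) = r * (m : ℚ)) →
      ∀ J : Finset ℕ, (∀ j : ℕ, j ∈ J ↔ ∃ m ∈ I, (j : ℚ) = r * (m : ℚ)) → z J = z I) ∧
    z (I.image fun j => I.min' hne + I.max' hne - j) = z I :=
  z_invariant_under_equivalence_general I hne
end

section
/- Let m₀, m₁ be positive rational numbers and let E be the elliptic curve over ℚ given by the Weierstrass equation y² = x(x − m₀m₁)(x + m₀ + m₁ + 1). Let F be the set consisting of the point at infinity O together with the seven affine points (0,0), (m₀m₁, 0), (−m₀−m₁−1, 0), (−m₁, −m₁(m₀+1)), (−m₀, m₀(m₁+1)), (m₀(m₀+m₁+1), −m₀(m₀+1)(m₀+m₁+1)), and (m₁(m₀+m₁+1), m₁(m₁+1)(m₀+m₁+1)). Then all these points lie on E(ℚ), F has exactly 8 elements, and F is a subgroup of the group E(ℚ) if and only if m₀ = m₁; in that case F is isomorphic to ℤ/2ℤ × ℤ/4ℤ.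 -/
/-- The elliptic curve `y² = x * (x - m₀ * m₁) * (x + m₀ + m₁ + 1)` over `ℚ`. -/
def Ecurve (m₀ m₁ : ℚ) : WeierstrassCurve.Affine ℚ :=
  { a₁ := 0
    a₂ := m₀ + m₁ + 1 - m₀ * m₁
    a₃ := 0
    a₄ := -(m₀ * m₁) * (m₀ + m₁ + 1)
    a₆ := 0 }

/-- The coordinates of the seven affine trivial points. -/
def trivCoords (m₀ m₁ : ℚ) : List (ℚ × ℚ) :=
  [(0, 0), (m₀ * m₁, 0), (-m₀ - m₁ - 1, 0), (-m₁, -m₁ * (m₀ + 1)), (-m₀, m₀ * (m₁ + 1)),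
    (m₀ * (m₀ + m₁ + 1), -m₀ * (m₀ + 1) * (m₀ + m₁ + 1)),
    (m₁ * (m₀ + m₁ + 1), m₁ * (m₁ + 1) * (m₀ + m₁ + 1))]

/-- The set `F` of the eight trivial points: the point at infinity together with the seven
affine trivial points. -/
def Fset (m₀ m₁ : ℚ) : Set (Ecurve m₀ m₁).Point :=
  {P | P = 0 ∨ ∃ x y : ℚ, ∃ h : (Ecurve m₀ m₁).Nonsingular x y,
    P = WeierstrassCurve.Affine.Point.some _ _ h ∧ (x, y) ∈ trivCoords m₀ m₁}

/-!
The seven affine points satisfy the equation identically, and the curve is elliptic because its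
discriminant is `16 (m₀ m₁ (m₀ + m₁ + 1) (m₀ + 1) (m₁ + 1))²`; for positive parameters the seven
coordinate pairs are distinct. Closure under negation already forces `m₀ = m₁`: the negative
`(-m₁, m₁ (m₀ + 1))` of a trivial point is again trivial only if it is `(-m₀, m₀ (m₁ + 1))`.
Conversely, for `m₀ = m₁ = m` the point `T₀ = (0, 0)` has order 2 and `Q = (-m, m (m + 1))` has
order 4 with `2Q = (m², 0) ≠ T₀`, so `(a, b) ↦ a T₀ + b Q` embeds `ℤ/2 × ℤ/4` into `E(ℚ)`. Its
image lies in `F` and has 8 elements, hence it is `F`.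
-/

open WeierstrassCurve WeierstrassCurve.Affine

lemma WeierstrassCurve.Affine.ncard_setOf_eq_zero_or_mem {R : Type*} [CommRing R] [DecidableEq R]
    {W : WeierstrassCurve.Affine R} {L : List (R × R)} (hL : ∀ p ∈ L, W.Nonsingular p.1 p.2) :
    {P : W.Point | P = 0 ∨ ∃ x y, ∃ h : W.Nonsingular x y, P = .some x y h ∧ (x, y) ∈ L}.ncard =
      L.toFinset.card + 1 := by
  let f : {p // p ∈ L} → W.Point := fun p => .some _ _ (hL p p.2)
  have hf : Function.Injective f := fun p q hpq => by
    obtain ⟨hx, hy⟩ := Point.some.inj hpq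
    exact Subtype.ext (Prod.ext hx hy)
  have hset : {P : W.Point | P = 0 ∨ ∃ x y, ∃ h : W.Nonsingular x y, P = .some x y h ∧ (x, y) ∈ L}
      = insert 0 (Set.range f) := by
    ext P
    simp only [Set.mem_ofPred_eq, Set.mem_insert_iff, Set.mem_range, Subtype.exists, f]
    constructor
    · rintro (rfl | ⟨x, y, h, rfl, hxy⟩)
      exacts [Or.inl rfl, Or.inr ⟨(x, y), hxy, rfl⟩]
    · rintro (rfl | ⟨p, hp, rfl⟩)
      exacts [Or.inl rfl, Or.inr ⟨_, _, _, rfl, hp⟩]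
  rw [hset, Set.ncard_insert_of_notMem, Set.ncard_range_of_injective hf]
  · rw [Nat.card_eq_fintype_card, Fintype.card_of_subtype L.toFinset fun _ => List.mem_toFinset]
  · rintro ⟨p, hp⟩
    exact Point.some_ne_zero _ hp

namespace Ecurve

variable {m₀ m₁ : ℚ}

lemma Δ_eq (m₀ m₁ : ℚ) :
    (Ecurve m₀ m₁).Δ = 16 * (m₀ * m₁ * (m₀ + m₁ + 1) * ((m₀ + 1) * (m₁ + 1))) ^ 2 := by
  simp only [WeierstrassCurve.Δ, b₂, b₄, b₆, b₈, Ecurve]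
  ring

lemma isElliptic_iff :
    (Ecurve m₀ m₁).IsElliptic ↔ m₀ * m₁ * (m₀ + m₁ + 1) * ((m₀ + 1) * (m₁ + 1)) ≠ 0 := by
  rw [WeierstrassCurve.isElliptic_iff, isUnit_iff_ne_zero, Δ_eq]
  simp

lemma isElliptic_of_pos (h₀ : 0 < m₀) (h₁ : 0 < m₁) : (Ecurve m₀ m₁).IsElliptic :=
  isElliptic_iff.mpr (by positivity)

lemma equation_iff (x y : ℚ) :
    (Ecurve m₀ m₁).Equation x y ↔ y ^ 2 = x * (x - m₀ * m₁) * (x + m₀ + m₁ + 1) := by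
  rw [Affine.equation_iff]
  simp only [Ecurve]
  constructor <;> intro h <;> linear_combination h

lemma negY_eq (x y : ℚ) : (Ecurve m₀ m₁).negY x y = -y := by
  simp [Affine.negY, Ecurve]

lemma addX_eq (x₁ x₂ ℓ : ℚ) :
    (Ecurve m₀ m₁).addX x₁ x₂ ℓ = ℓ ^ 2 - (m₀ + m₁ + 1 - m₀ * m₁) - x₁ - x₂ := by
  simp [Affine.addX, Ecurve]

lemma addY_eq (x₁ x₂ y₁ ℓ : ℚ) :
    (Ecurve m₀ m₁).addY x₁ x₂ y₁ ℓ = -(ℓ * ((Ecurve m₀ m₁).addX x₁ x₂ ℓ - x₁) + y₁) := by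
  rw [Affine.addY, negY_eq, negAddY]

lemma equation_of_mem_trivCoords {p : ℚ × ℚ} (hp : p ∈ trivCoords m₀ m₁) :
    (Ecurve m₀ m₁).Equation p.1 p.2 := by
  simp only [trivCoords, List.mem_cons, List.not_mem_nil, or_false] at hp
  rcases hp with rfl | rfl | rfl | rfl | rfl | rfl | rfl <;> rw [equation_iff] <;> ring

variable [(Ecurve m₀ m₁).IsElliptic]

lemma nonsingular_of_eq {x y : ℚ} (h : y ^ 2 = x * (x - m₀ * m₁) * (x + m₀ + m₁ + 1)) :
    (Ecurve m₀ m₁).Nonsingular x y :=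
  equation_iff_nonsingular.mp ((equation_iff x y).mpr h)

lemma nonsingular_of_mem_trivCoords {p : ℚ × ℚ} (hp : p ∈ trivCoords m₀ m₁) :
    (Ecurve m₀ m₁).Nonsingular p.1 p.2 :=
  equation_iff_nonsingular.mp (equation_of_mem_trivCoords hp)

lemma ncard_Fset : (Fset m₀ m₁).ncard = (trivCoords m₀ m₁).toFinset.card + 1 :=
  ncard_setOf_eq_zero_or_mem fun _ => nonsingular_of_mem_trivCoords

end Ecurve

lemma trivCoords_nodup {m₀ m₁ : ℚ} (h₀ : 0 < m₀) (h₁ : 0 < m₁) : (trivCoords m₀ m₁).Nodup := by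
  simp only [trivCoords, List.nodup_cons, List.mem_cons, List.not_mem_nil, or_false,
    Prod.mk.injEq, not_or, not_and, List.nodup_nil, and_true, not_false_eq_true]
  and_intros <;> intro hx <;> nlinarith [mul_pos h₀ h₁]

lemma some_mem_Fset_iff {m₀ m₁ x y : ℚ} {h : (Ecurve m₀ m₁).Nonsingular x y} :
    Point.some x y h ∈ Fset m₀ m₁ ↔ (x, y) ∈ trivCoords m₀ m₁ := by
  simp only [Fset, Set.mem_ofPred_eq, Point.some_ne_zero h, false_or]
  constructor
  · rintro ⟨x, y, h, he, hxy⟩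
    obtain ⟨rfl, rfl⟩ := Point.some.inj he
    exact hxy
  · exact fun hxy => ⟨x, y, h, rfl, hxy⟩

lemma eq_of_forall_neg_mem_Fset {m₀ m₁ : ℚ} (h₀ : 0 < m₀) (h₁ : 0 < m₁)
    (hneg : ∀ P ∈ Fset m₀ m₁, -P ∈ Fset m₀ m₁) : m₀ = m₁ := by
  have := Ecurve.isElliptic_of_pos h₀ h₁
  have hP : (-m₁, -m₁ * (m₀ + 1)) ∈ trivCoords m₀ m₁ := by simp [trivCoords]
  have hmem := hneg _ (some_mem_Fset_iff (h := Ecurve.nonsingular_of_mem_trivCoords hP) |>.mpr hP)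
  rw [Point.neg_some, some_mem_Fset_iff, Ecurve.negY_eq] at hmem
  simp only [trivCoords, List.mem_cons, List.not_mem_nil, or_false, Prod.mk.injEq] at hmem
  rcases hmem with ⟨hx, hy⟩ | ⟨hx, hy⟩ | ⟨hx, hy⟩ | ⟨hx, hy⟩ | ⟨hx, hy⟩ | ⟨hx, hy⟩ | ⟨hx, hy⟩ <;>
    nlinarith [mul_pos h₀ h₁]

namespace Ecurve

variable (m : ℚ) [(Ecurve m m).IsElliptic]

noncomputable def T₀ : (Ecurve m m).Point := .some 0 0 (nonsingular_of_eq (by ring))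
noncomputable def T₁ : (Ecurve m m).Point := .some (m * m) 0 (nonsingular_of_eq (by ring))
noncomputable def T₂ : (Ecurve m m).Point := .some (-m - m - 1) 0 (nonsingular_of_eq (by ring))
noncomputable def Q : (Ecurve m m).Point := .some (-m) (m * (m + 1)) (nonsingular_of_eq (by ring))
noncomputable def R : (Ecurve m m).Point :=
  .some (m * (m + m + 1)) (m * (m + 1) * (m + m + 1)) (nonsingular_of_eq (by ring))

lemma ne_zero_of_isElliptic : m ≠ 0 ∧ m + 1 ≠ 0 := by
  have h := isElliptic_iff.mp ‹(Ecurve m m).IsElliptic›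
  constructor <;> intro h0 <;> apply h <;> simp [h0]

lemma T₀_add_T₀ : T₀ m + T₀ m = 0 := Point.add_self_of_Y_eq (by rw [negY_eq]; ring)

lemma T₁_add_T₁ : T₁ m + T₁ m = 0 := Point.add_self_of_Y_eq (by rw [negY_eq]; ring)

lemma Q_add_Q : Q m + Q m = T₁ m := by
  have hy₀ : m * (m + 1) ≠ 0 := mul_ne_zero (ne_zero_of_isElliptic m).1 (ne_zero_of_isElliptic m).2
  have hy : m * (m + 1) ≠ (Ecurve m m).negY (-m) (m * (m + 1)) := by
    rw [negY_eq]
    contrapose! hy₀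
    linarith
  have hℓ : (Ecurve m m).slope (-m) (-m) (m * (m + 1)) (m * (m + 1)) = -1 := by
    rw [slope_of_Y_ne rfl hy, negY_eq, div_eq_iff (by contrapose! hy₀; linarith)]
    simp only [Ecurve]
    ring
  rw [Q, T₁, Point.add_self_of_Y_ne hy, Point.some.injEq, addY_eq, addX_eq, hℓ]
  constructor <;> ring

lemma T₀_add_Q : T₀ m + Q m = R m := by
  have hx : (0 : ℚ) ≠ -m := by simpa [eq_comm] using (ne_zero_of_isElliptic m).1
  have hℓ : (Ecurve m m).slope 0 (-m) 0 (m * (m + 1)) = -(m + 1) := by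
    rw [slope_of_X_ne hx]
    field_simp
    ring
  rw [T₀, Q, R, Point.add_of_X_ne hx, Point.some.injEq, addY_eq, addX_eq, hℓ]
  constructor <;> ring

lemma T₀_add_T₁ : T₀ m + T₁ m = T₂ m := by
  have hx : (0 : ℚ) ≠ m * m := by simpa [eq_comm] using (ne_zero_of_isElliptic m).1
  rw [T₀, T₁, T₂, Point.add_of_X_ne hx, Point.some.injEq, slope_of_X_ne hx, sub_self, zero_div,
    addY_eq, addX_eq]
  constructor <;> ring

noncomputable def torsionHom : ZMod 2 × ZMod 4 →+ (Ecurve m m).Point :=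
  (ZMod.lift 2 ⟨zmultiplesHom _ (T₀ m), by simp [two_zsmul, T₀_add_T₀]⟩).coprod
    (ZMod.lift 4 ⟨zmultiplesHom _ (Q m), by
      rw [zmultiplesHom_apply, show ((4 : ℕ) : ℤ) = 2 * 2 from rfl, mul_zsmul, two_zsmul (Q m),
        Q_add_Q, two_zsmul, T₁_add_T₁]⟩)

lemma torsionHom_one_zero : torsionHom m (1, 0) = T₀ m := by
  simp only [torsionHom, AddMonoidHom.coprod_apply, _root_.map_zero, add_zero]
  rw [← Int.cast_one, ZMod.lift_coe]
  exact one_zsmul _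

lemma torsionHom_zero_one : torsionHom m (0, 1) = Q m := by
  simp only [torsionHom, AddMonoidHom.coprod_apply, _root_.map_zero, zero_add]
  rw [← Int.cast_one, ZMod.lift_coe]
  exact one_zsmul _

lemma torsionHom_mem_Fset_and_ne_zero {v : ZMod 2 × ZMod 4} (hv : v ≠ 0) :
    torsionHom m v ∈ Fset m m ∧ torsionHom m v ≠ 0 := by
  have hcases : ∀ w : ZMod 2 × ZMod 4, w = 0 ∨ w = (0, 1) ∨ w = (0, 1) + (0, 1) ∨ w = -(0, 1) ∨
      w = (1, 0) ∨ w = (1, 0) + (0, 1) ∨ w = (1, 0) + ((0, 1) + (0, 1)) ∨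
      w = -((1, 0) + (0, 1)) := by
    decide
  rcases hcases v with rfl | rfl | rfl | rfl | rfl | rfl | rfl | rfl
  · exact absurd rfl hv
  all_goals
    simp only [map_add, map_neg, torsionHom_one_zero, torsionHom_zero_one, Q_add_Q, T₀_add_Q,
      T₀_add_T₁]
    simp only [Q, T₀, T₁, T₂, R, Point.neg_some]
    refine ⟨some_mem_Fset_iff.mpr ?_, Point.some_ne_zero _⟩
    simp [trivCoords, Ecurve]

lemma torsionHom_injective : Function.Injective (torsionHom m) :=
  (injective_iff_map_eq_zero _).mpr fun v hv => by
    by_contra hv0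
    exact (torsionHom_mem_Fset_and_ne_zero m hv0).2 hv

lemma coe_range_torsionHom : ((torsionHom m).range : Set (Ecurve m m).Point) = Fset m m := by
  have hsub : Set.range (torsionHom m) ⊆ Fset m m := by
    rintro _ ⟨v, rfl⟩
    by_cases hv : v = 0
    · exact Or.inl (hv ▸ map_zero _)
    · exact (torsionHom_mem_Fset_and_ne_zero m hv).1
  have hcard : (Fset m m).ncard ≤ (Set.range (torsionHom m)).ncard := by
    rw [ncard_Fset, Set.ncard_range_of_injective (torsionHom_injective m)]
    calc (trivCoords m m).toFinset.card + 1 ≤ (trivCoords m m).length + 1 :=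
          Nat.succ_le_succ (List.toFinset_card_le _)
      _ = Nat.card (ZMod 2 × ZMod 4) := by simp [trivCoords]
  rw [AddMonoidHom.coe_range]
  exact Set.eq_of_subset_of_ncard_le hsub hcard (Set.finite_of_ncard_ne_zero (by simp [ncard_Fset]))

lemma exists_addSubgroup_coe_eq_Fset :
    ∃ H : AddSubgroup (Ecurve m m).Point,
      (H : Set (Ecurve m m).Point) = Fset m m ∧ Nonempty (H ≃+ ZMod 2 × ZMod 4) :=
  ⟨_, coe_range_torsionHom m, ⟨(AddMonoidHom.ofInjective (torsionHom_injective m)).symm⟩⟩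

end Ecurve

/-- For positive rationals `m₀, m₁`, the eight trivial points lie on the elliptic curve
`y² = x * (x - m₀ * m₁) * (x + m₀ + m₁ + 1)`, they are eight distinct points, and they form
a subgroup of the Mordell–Weil group if and only if `m₀ = m₁`, in which case this subgroup
is isomorphic to `ℤ/2ℤ × ℤ/4ℤ`. -/
theorem trivial_points_subgroup_iff_symmetric (m₀ m₁ : ℚ) (h₀ : 0 < m₀) (h₁ : 0 < m₁) :
    (∀ p ∈ trivCoords m₀ m₁, (Ecurve m₀ m₁).Nonsingular p.1 p.2) ∧
    (Fset m₀ m₁).ncard = 8 ∧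
    ((∃ H : AddSubgroup (Ecurve m₀ m₁).Point, (H : Set (Ecurve m₀ m₁).Point) = Fset m₀ m₁)
      ↔ m₀ = m₁) ∧
    (m₀ = m₁ → ∃ H : AddSubgroup (Ecurve m₀ m₁).Point,
      (H : Set (Ecurve m₀ m₁).Point) = Fset m₀ m₁ ∧
        Nonempty (H ≃+ ZMod 2 × ZMod 4)) := by
  have := Ecurve.isElliptic_of_pos h₀ h₁
  refine ⟨fun p hp => Ecurve.nonsingular_of_mem_trivCoords hp, ?_, ⟨?_, ?_⟩, ?_⟩
  · rw [Ecurve.ncard_Fset, List.toFinset_card_of_nodup (trivCoords_nodup h₀ h₁)]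
    rfl
  · rintro ⟨H, hH⟩
    refine eq_of_forall_neg_mem_Fset h₀ h₁ fun P hP => ?_
    rw [← hH] at hP ⊢
    exact neg_mem hP
  · rintro rfl
    obtain ⟨H, hH, -⟩ := Ecurve.exists_addSubgroup_coe_eq_Fset m₀
    exact ⟨H, hH⟩
  · rintro rfl
    exact Ecurve.exists_addSubgroup_coe_eq_Fset m₀
end

section
/- Let n₁ < n₂ < n₃ be positive integers with n₃ ≠ n₁ + n₂. Set a = ((n₁+n₂−n₃)² − 4n₁n₂)² and q = 8(n₁+n₂−n₃)(n₁−n₂−n₃)(n₁−n₂+n₃). Then q ≠ 0 and each of the four integers a, a + n₁q, a + n₂q, a + n₃q is a perfect square. In particular, for every non-symmetric set I = {0, n₁, n₂, n₃} there exists a nonconstant integer arithmetic progression having squares at all positions of I, so z_I > 0. -/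
theorem Int.isSquare_of_sq_mul {s x : ℤ} (hs : s ≠ 0) (h : IsSquare (s ^ 2 * x)) :
    IsSquare x := by
  obtain ⟨y, hy⟩ := h
  obtain ⟨t, rfl⟩ : s ∣ y :=
    (Int.pow_dvd_pow_iff two_ne_zero).mp ⟨x, by rw [sq y, ← hy]⟩
  exact ⟨t, mul_left_cancel₀ (pow_ne_zero 2 hs) (by rw [hy]; ring)⟩

theorem Zset_nonempty_of_forall_isSquare {I : Finset ℕ} {q a : ℤ} (hq : q ≠ 0)
    (h : ∀ i ∈ I, IsSquare (q * i + a)) : (Zset I).Nonempty := by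
  obtain ⟨r, s, -, hs, hsr, hr⟩ := Nat.sq_mul_squarefree_of_pos (Int.gcd_pos_of_ne_zero_left a hq)
  have hs₀ : (s : ℤ) ≠ 0 := by positivity
  have hsq : (s : ℤ) ^ 2 ∣ (Int.gcd q a : ℤ) := ⟨r, by rw [← hsr]; push_cast; ring⟩
  obtain ⟨q', rfl⟩ := hsq.trans (Int.gcd_dvd_left q a)
  obtain ⟨a', rfl⟩ := hsq.trans (Int.gcd_dvd_right _ a)
  refine ⟨(q', a'), ?_, right_ne_zero_of_mul hq, fun i hi => ?_⟩
  · have hgcd : Int.gcd q' a' = r := by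
      rw [Int.gcd_mul_left, Int.natAbs_pow, Int.natAbs_natCast] at hsr
      exact (Nat.eq_of_mul_eq_mul_left (pow_pos hs 2) hsr).symm
    simpa only [hgcd] using hr
  · exact Int.isSquare_of_sq_mul hs₀ (by convert h i hi using 1; ring)

section Progression

variable {R : Type*} [CommRing R] (x y z : R)

def progressionStart : R := ((x + y - z) ^ 2 - 4 * x * y) ^ 2

def progressionStep : R := 8 * (x + y - z) * (x - y - z) * (x - y + z)

theorem progressionStart_swap₁₂ : progressionStart y x z = progressionStart x y z := by
  unfold progressionStart; ring

theorem progressionStart_swap₁₃ : progressionStart z y x = progressionStart x y z := by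
  unfold progressionStart; ring

theorem progressionStep_swap₁₂ : progressionStep y x z = progressionStep x y z := by
  unfold progressionStep; ring

theorem progressionStep_swap₁₃ : progressionStep z y x = progressionStep x y z := by
  unfold progressionStep; ring

theorem isSquare_progressionStart_add_mul_progressionStep :
    IsSquare (progressionStart x y z + x * progressionStep x y z) :=
  ⟨3 * x ^ 2 - y ^ 2 - z ^ 2 - 2 * x * y - 2 * x * z + 2 * y * z, by
    unfold progressionStart progressionStep; ring⟩

theorem progressionStep_ne_zero [IsDomain R] [CharZero R] {x y z : R} (hz : x + y ≠ z)
    (hx : x ≠ y + z) (hy : y ≠ x + z) : progressionStep x y z ≠ 0 := by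
  have h₈ : (8 : R) ≠ 0 := by norm_num
  have h₁ : x + y - z ≠ 0 := sub_ne_zero.mpr hz
  have h₂ : x - y - z ≠ 0 := by rwa [sub_sub, sub_ne_zero]
  have h₃ : x - y + z ≠ 0 := fun h => hy (by linear_combination -h)
  unfold progressionStep
  exact mul_ne_zero (mul_ne_zero (mul_ne_zero h₈ h₁) h₂) h₃

end Progression

theorem nonsymmetric_quadruple_has_progression_general (n₁ n₂ n₃ : ℕ)
    (h₁₂ : n₁ < n₂) (h₂₃ : n₂ < n₃) (hsym : n₃ ≠ n₁ + n₂) :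
    ∀ a q : ℤ, a = (((n₁ : ℤ) + n₂ - n₃) ^ 2 - 4 * n₁ * n₂) ^ 2 →
      q = 8 * ((n₁ : ℤ) + n₂ - n₃) * ((n₁ : ℤ) - n₂ - n₃) * ((n₁ : ℤ) - n₂ + n₃) →
      q ≠ 0 ∧ IsSquare a ∧ IsSquare (a + n₁ * q) ∧ IsSquare (a + n₂ * q) ∧
        IsSquare (a + n₃ * q) ∧ (Zset {0, n₁, n₂, n₃}).Nonempty := by
  intro a q ha hq
  obtain rfl : a = progressionStart (n₁ : ℤ) n₂ n₃ := ha
  obtain rfl : q = progressionStep (n₁ : ℤ) n₂ n₃ := hq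
  have hq : progressionStep (n₁ : ℤ) n₂ n₃ ≠ 0 := by
    apply progressionStep_ne_zero <;> omega
  have h₀ : IsSquare (progressionStart (n₁ : ℤ) n₂ n₃) := IsSquare.sq _
  have h₁ := isSquare_progressionStart_add_mul_progressionStep (n₁ : ℤ) n₂ n₃
  have h₂ := isSquare_progressionStart_add_mul_progressionStep (n₂ : ℤ) n₁ n₃
  have h₃ := isSquare_progressionStart_add_mul_progressionStep (n₃ : ℤ) n₂ n₁
  rw [progressionStart_swap₁₂, progressionStep_swap₁₂] at h₂
  rw [progressionStart_swap₁₃, progressionStep_swap₁₃] at h₃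
  refine ⟨hq, h₀, h₁, h₂, h₃, ?_⟩
  refine Zset_nonempty_of_forall_isSquare (a := progressionStart (n₁ : ℤ) n₂ n₃) hq fun i hi => ?_
  simp only [Finset.mem_insert, Finset.mem_singleton] at hi
  rcases hi with rfl | rfl | rfl | rfl
  · simpa using h₀
  all_goals rw [mul_comm, add_comm]; assumption

/-- For a non-symmetric set `{0, n₁, n₂, n₃}` (i.e. `n₃ ≠ n₁ + n₂`), the explicit
arithmetic progression with `a = ((n₁ + n₂ - n₃)² - 4 n₁ n₂)²` and
`q = 8 (n₁ + n₂ - n₃)(n₁ - n₂ - n₃)(n₁ - n₂ + n₃)` is nonconstant and has squares at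
positions `0, n₁, n₂, n₃`; in particular `Zset {0, n₁, n₂, n₃}` is nonempty. -/
theorem nonsymmetric_quadruple_has_progression (n₁ n₂ n₃ : ℕ) (h₀ : 0 < n₁)
    (h₁₂ : n₁ < n₂) (h₂₃ : n₂ < n₃) (hsym : n₃ ≠ n₁ + n₂) :
    ∀ a q : ℤ, a = (((n₁ : ℤ) + n₂ - n₃) ^ 2 - 4 * n₁ * n₂) ^ 2 →
      q = 8 * ((n₁ : ℤ) + n₂ - n₃) * ((n₁ : ℤ) - n₂ - n₃) * ((n₁ : ℤ) - n₂ + n₃) →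
      q ≠ 0 ∧ IsSquare a ∧ IsSquare (a + n₁ * q) ∧ IsSquare (a + n₂ * q) ∧
        IsSquare (a + n₃ * q) ∧ (Zset {0, n₁, n₂, n₃}).Nonempty :=
  nonsymmetric_quadruple_has_progression_general n₁ n₂ n₃ h₁₂ h₂₃ hsym
end

section
/- Let z₁ and z₂ be nonzero rational numbers, and set t = (z₁ + 1/z₁ + z₂ + 1/z₂)/4 and x = −(z₁+z₂)²/(4z₁z₂). Then x(x+1)(x+t²) is the square of a rational number. Moreover, if z₁ ≠ ±1, z₂ ≠ ±1, z₁ ≠ ±z₂ and z₁ ≠ 1/z₂, then x ∉ {0, −1, −t², t, −t}, so this produces a non-trivial rational point on the curve y² = x(x+1)(x+t²). -/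
/-!
Over the common denominator `4 z₁ z₂` everything factors:
`x (x + 1) = ((z₁ + z₂)(z₁ - z₂) / (4 z₁ z₂))²`, `x + t² = ((z₁ + z₂)(z₁ z₂ - 1) / (4 z₁ z₂))²` and
`x ∓ t = ∓(z₁ + z₂)(z₁ ± 1)(z₂ ± 1) / (4 z₁ z₂)`. So the product is a square, and each trivial
`x`-coordinate is hit only when one of the linear factors vanishes.
-/

namespace NontrivialPointFamily

variable {K : Type*} [Field K] [NeZero (2 : K)] {z₁ z₂ : K}

def pointX (z₁ z₂ : K) : K := -(z₁ + z₂) ^ 2 / (4 * z₁ * z₂)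

def pointT (z₁ z₂ : K) : K := (z₁ + 1 / z₁ + z₂ + 1 / z₂) / 4

variable (K) in
lemma four_ne_zero_of_two_ne_zero : (4 : K) ≠ 0 := by
  rw [show (4 : K) = 2 ^ 2 by norm_num]
  exact pow_ne_zero 2 two_ne_zero

section
variable (h₁ : z₁ ≠ 0) (h₂ : z₂ ≠ 0)
include h₁ h₂

lemma pointX_add_one : pointX z₁ z₂ + 1 = -(z₁ - z₂) ^ 2 / (4 * z₁ * z₂) := by
  have := four_ne_zero_of_two_ne_zero K
  unfold pointX
  field_simp
  ring

lemma pointX_add_pointT_sq :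
    pointX z₁ z₂ + pointT z₁ z₂ ^ 2 = ((z₁ + z₂) * (z₁ * z₂ - 1) / (4 * z₁ * z₂)) ^ 2 := by
  have := four_ne_zero_of_two_ne_zero K
  unfold pointX pointT
  field_simp
  ring

lemma pointX_sub_pointT :
    pointX z₁ z₂ - pointT z₁ z₂ = -((z₁ + z₂) * (z₁ + 1) * (z₂ + 1)) / (4 * z₁ * z₂) := by
  have := four_ne_zero_of_two_ne_zero K
  unfold pointX pointT
  field_simp
  ring

lemma pointX_add_pointT :
    pointX z₁ z₂ + pointT z₁ z₂ = (z₁ + z₂) * (z₁ - 1) * (z₂ - 1) / (4 * z₁ * z₂) := by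
  have := four_ne_zero_of_two_ne_zero K
  unfold pointX pointT
  field_simp
  ring

lemma pointX_mul_add_one_mul_add_pointT_sq :
    pointX z₁ z₂ * (pointX z₁ z₂ + 1) * (pointX z₁ z₂ + pointT z₁ z₂ ^ 2) =
      ((z₁ + z₂) ^ 2 * (z₁ - z₂) * (z₁ * z₂ - 1) / (16 * z₁ ^ 2 * z₂ ^ 2)) ^ 2 := by
  rw [pointX_add_one h₁ h₂, pointX_add_pointT_sq h₁ h₂, pointX]
  field_simp
  ring

lemma four_mul_mul_ne_zero : 4 * z₁ * z₂ ≠ 0 :=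
  mul_ne_zero (mul_ne_zero (four_ne_zero_of_two_ne_zero K) h₁) h₂

lemma pointX_ne_zero (hs : z₁ + z₂ ≠ 0) : pointX z₁ z₂ ≠ 0 :=
  div_ne_zero (neg_ne_zero.mpr (pow_ne_zero 2 hs)) (four_mul_mul_ne_zero h₁ h₂)

lemma pointX_ne_neg_one (hne : z₁ ≠ z₂) : pointX z₁ z₂ ≠ -1 := by
  rw [ne_eq, ← add_eq_zero_iff_eq_neg, pointX_add_one h₁ h₂]
  exact div_ne_zero (neg_ne_zero.mpr (pow_ne_zero 2 (sub_ne_zero.mpr hne))) (four_mul_mul_ne_zero h₁ h₂)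

lemma pointX_ne_neg_pointT_sq (hs : z₁ + z₂ ≠ 0) (hp : z₁ * z₂ ≠ 1) :
    pointX z₁ z₂ ≠ -pointT z₁ z₂ ^ 2 := by
  rw [ne_eq, ← add_eq_zero_iff_eq_neg, pointX_add_pointT_sq h₁ h₂]
  exact pow_ne_zero 2 (div_ne_zero (mul_ne_zero hs (sub_ne_zero.mpr hp)) (four_mul_mul_ne_zero h₁ h₂))

lemma pointX_ne_pointT (hs : z₁ + z₂ ≠ 0) (h₁' : z₁ ≠ -1) (h₂' : z₂ ≠ -1) :
    pointX z₁ z₂ ≠ pointT z₁ z₂ := by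
  rw [ne_eq, ← sub_eq_zero, pointX_sub_pointT h₁ h₂]
  refine div_ne_zero (neg_ne_zero.mpr (mul_ne_zero (mul_ne_zero hs ?_) ?_)) (four_mul_mul_ne_zero h₁ h₂)
  · exact fun h => h₁' (eq_neg_of_add_eq_zero_left h)
  · exact fun h => h₂' (eq_neg_of_add_eq_zero_left h)

lemma pointX_ne_neg_pointT (hs : z₁ + z₂ ≠ 0) (h₁' : z₁ ≠ 1) (h₂' : z₂ ≠ 1) :
    pointX z₁ z₂ ≠ -pointT z₁ z₂ := by
  rw [ne_eq, ← add_eq_zero_iff_eq_neg, pointX_add_pointT h₁ h₂]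
  exact div_ne_zero (mul_ne_zero (mul_ne_zero hs (sub_ne_zero.mpr h₁')) (sub_ne_zero.mpr h₂'))
    (four_mul_mul_ne_zero h₁ h₂)

end

end NontrivialPointFamily

open NontrivialPointFamily in
/-- For nonzero rationals `z₁, z₂`, with `t = (z₁ + 1/z₁ + z₂ + 1/z₂)/4` and
`x = -(z₁ + z₂)²/(4 z₁ z₂)`, the quantity `x (x + 1) (x + t²)` is a rational square;
moreover, under the indicated non-degeneracy conditions, `x` avoids the `x`-coordinates
`0, -1, -t², t, -t` of the trivial points of `y² = x (x + 1) (x + t²)`. -/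
theorem nontrivial_point_family (z₁ z₂ : ℚ) (h₁ : z₁ ≠ 0) (h₂ : z₂ ≠ 0)
    (t x : ℚ) (htdef : t = (z₁ + 1 / z₁ + z₂ + 1 / z₂) / 4)
    (hxdef : x = -(z₁ + z₂) ^ 2 / (4 * z₁ * z₂)) :
    (∃ w : ℚ, x * (x + 1) * (x + t ^ 2) = w ^ 2) ∧
    (z₁ ≠ 1 → z₁ ≠ -1 → z₂ ≠ 1 → z₂ ≠ -1 → z₁ ≠ z₂ → z₁ ≠ -z₂ → z₁ ≠ 1 / z₂ →
      x ≠ 0 ∧ x ≠ -1 ∧ x ≠ -t ^ 2 ∧ x ≠ t ∧ x ≠ -t) := by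
  obtain rfl : t = pointT z₁ z₂ := htdef
  obtain rfl : x = pointX z₁ z₂ := hxdef
  refine ⟨⟨_, pointX_mul_add_one_mul_add_pointT_sq h₁ h₂⟩, ?_⟩
  intro hz₁ hz₁' hz₂ hz₂' hne hne' hinv
  have hs : z₁ + z₂ ≠ 0 := fun h => hne' (eq_neg_of_add_eq_zero_left h)
  have hp : z₁ * z₂ ≠ 1 := fun h => hinv (eq_one_div_of_mul_eq_one_left h)
  exact ⟨pointX_ne_zero h₁ h₂ hs, pointX_ne_neg_one h₁ h₂ hne, pointX_ne_neg_pointT_sq h₁ h₂ hs hp,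
    pointX_ne_pointT h₁ h₂ hs hz₁' hz₂', pointX_ne_neg_pointT h₁ h₂ hs hz₁ hz₂⟩
end

section
/- Let s > 1 be an integer. Then for each n in the set {0, 4s, 4s(4s²−1), 8s(8s⁴−6s²+1), 8s(32s⁶−40s⁴+14s²−1)}, both (s−1)·n + 1 and (s+1)·n + 1 are perfect squares. In particular, there exist two distinct nonconstant arithmetic progressions of integers each having squares at these five positions. -/
/-!
If `u` and `v` satisfy `u² + v² - 2suv = 1`, then `(s - 1) · 2uv + 1 = (v - u)²` and
`(s + 1) · 2uv + 1 = (v + u)²`. Consecutive values `u = Uₖ(s)`, `v = Uₖ₊₁(s)` of the Chebyshev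
polynomials of the second kind satisfy this identity, and the five positions are `2 Uₖ(s) Uₖ₊₁(s)`
for `k = -1, 0, 1, 2, 3`.
-/

open Polynomial Polynomial.Chebyshev

namespace Polynomial.Chebyshev

variable (R : Type*) [CommRing R]

theorem U_sq_add_U_sq (n : ℤ) : U R n ^ 2 + U R (n + 1) ^ 2 - 2 * X * U R n * U R (n + 1) = 1 := by
  have h := congrArg (·.comp (2 * X)) (S_sq_add_S_sq R n)
  simpa only [sub_comp, add_comp, pow_comp, mul_comp, X_comp, one_comp, S_comp_two_mul_X] using h

theorem U_eval_sq_add_U_eval_sq (s : R) (n : ℤ) :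
    (U R n).eval s ^ 2 + (U R (n + 1)).eval s ^ 2 - 2 * s * (U R n).eval s * (U R (n + 1)).eval s
      = 1 := by
  simpa using congrArg (eval s) (U_sq_add_U_sq R n)

theorem U_three : U R 3 = 8 * X ^ 3 - 4 * X := by
  have h := U_add_two R 1
  norm_num [U_two, U_one] at h
  rw [h]; ring

theorem U_four : U R 4 = 16 * X ^ 4 - 12 * X ^ 2 + 1 := by
  have h := U_add_two R 2
  norm_num [U_two, U_three] at h
  rw [h]; ring

end Polynomial.Chebyshev

section

variable {R : Type*} [CommRing R] {s u v : R}

theorem sub_one_mul_two_mul_add_one_eq_sq (h : u ^ 2 + v ^ 2 - 2 * s * u * v = 1) :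
    (s - 1) * (2 * (u * v)) + 1 = (v - u) ^ 2 := by
  linear_combination -h

theorem add_one_mul_two_mul_add_one_eq_sq (h : u ^ 2 + v ^ 2 - 2 * s * u * v = 1) :
    (s + 1) * (2 * (u * v)) + 1 = (v + u) ^ 2 := by
  linear_combination -h

end

/-- For each integer `s > 1`, the two distinct nonconstant arithmetic progressions
`(s - 1) * n + 1` and `(s + 1) * n + 1` both take square values at the five positions
`0, 4s, 4s(4s² - 1), 8s(8s⁴ - 6s² + 1), 8s(32s⁶ - 40s⁴ + 14s² - 1)`. -/
theorem two_progressions_five_common_squares (s : ℤ) (hs : 1 < s) :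
    (∀ n ∈ ({0, 4 * s, 4 * s * (4 * s ^ 2 - 1), 8 * s * (8 * s ^ 4 - 6 * s ^ 2 + 1),
        8 * s * (32 * s ^ 6 - 40 * s ^ 4 + 14 * s ^ 2 - 1)} : Set ℤ),
      IsSquare ((s - 1) * n + 1) ∧ IsSquare ((s + 1) * n + 1)) ∧
    s - 1 ≠ 0 ∧ s + 1 ≠ 0 ∧ s - 1 ≠ s + 1 := by
  refine ⟨fun n hn => ?_, by omega, by omega, by omega⟩
  obtain ⟨k, rfl⟩ : ∃ k : ℤ, n = 2 * ((U ℤ k).eval s * (U ℤ (k + 1)).eval s) := by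
    simp only [Set.mem_insert_iff, Set.mem_singleton_iff] at hn
    rcases hn with rfl | rfl | rfl | rfl | rfl
    exacts [⟨-1, by simp⟩, ⟨0, by simp; ring⟩, ⟨1, by simp [U_two]; ring⟩,
      ⟨2, by simp [U_two, U_three]; ring⟩, ⟨3, by simp [U_three, U_four]; ring⟩]
  have h := U_eval_sq_add_U_eval_sq ℤ s k
  rw [sub_one_mul_two_mul_add_one_eq_sq h, add_one_mul_two_mul_add_one_eq_sq h]
  exact ⟨IsSquare.sq _, IsSquare.sq _⟩
end
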